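/- Let A and B be self-adjoint operators on a Hilbert space H, with A injective, and define T on D(B) ⊕ D(A⁻¹) ⊆ H ⊕ H by T(x, y) = (A⁻¹y, Bx). Then the adjoint of T is given by T*(x, y) = (By, A⁻¹x) on D(A⁻¹) ⊕ D(B). -/

import Mathlib

/-! Testing `T†` against the vectors `(x, 0)` and `(0, y)` of `D(T)` shows that the adjoint of
`T = [[0, S], [R, 0]]` is `[[0, R†], [S†, 0]]` whenever `S` and `R` are densely defined. For
`S = A⁻¹` it then remains to see that `A⁻¹` is self-adjoint: its graph is the swap of the graph
of `A`, swapping commutes with forming the adjoint graph, and its domain `ran A` is dense since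
`(ran A)ᗮ = ker A† = ker A = 0`. -/
open LinearPMap

/-- The block operator matrix `[[0, S],[R, 0]]`, i.e. `T(x, y) = (S y, R x)`,
with domain `D(R) ⊕ D(S)` in the Hilbert space direct sum `H ⊕ H`. -/
noncomputable def blockOp {H : Type*} [NormedAddCommGroup H] [InnerProductSpace ℂ H]
    (S R : H →ₗ.[ℂ] H) : WithLp 2 (H × H) →ₗ.[ℂ] WithLp 2 (H × H) where
  domain :=
  { carrier := {z | (WithLp.equiv 2 (H × H) z).1 ∈ R.domain ∧
      (WithLp.equiv 2 (H × H) z).2 ∈ S.domain}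
    add_mem' := fun ha hb => ⟨Submodule.add_mem _ ha.1 hb.1, Submodule.add_mem _ ha.2 hb.2⟩
    zero_mem' := ⟨Submodule.zero_mem _, Submodule.zero_mem _⟩
    smul_mem' := fun c _ hz => ⟨Submodule.smul_mem _ c hz.1, Submodule.smul_mem _ c hz.2⟩ }
  toFun :=
  { toFun := fun z => (WithLp.equiv 2 (H × H)).symm
      (S ⟨(WithLp.equiv 2 (H × H) z.1).2, z.2.2⟩, R ⟨(WithLp.equiv 2 (H × H) z.1).1, z.2.1⟩)
    map_add' := fun z w => congrArg (WithLp.equiv 2 (H × H)).symm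
      (Prod.ext (S.map_add ⟨_, z.2.2⟩ ⟨_, w.2.2⟩) (R.map_add ⟨_, z.2.1⟩ ⟨_, w.2.1⟩))
    map_smul' := fun c z => congrArg (WithLp.equiv 2 (H × H)).symm
      (Prod.ext (S.map_smul c ⟨_, z.2.2⟩) (R.map_smul c ⟨_, z.2.1⟩)) }

namespace Submodule

variable {𝕜 E F : Type*} [RCLike 𝕜] [NormedAddCommGroup E] [InnerProductSpace 𝕜 E]
  [NormedAddCommGroup F] [InnerProductSpace 𝕜 F]

theorem adjoint_map_prodComm (g : Submodule 𝕜 (E × F)) :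
    (g.map (LinearEquiv.prodComm 𝕜 E F : E × F →ₗ[𝕜] F × E)).adjoint =
      g.adjoint.map (LinearEquiv.prodComm 𝕜 F E : F × E →ₗ[𝕜] E × F) := by
  ext ⟨x, y⟩
  simp only [mem_adjoint_iff, map_equiv_eq_comap_symm, mem_comap, LinearEquiv.coe_coe,
    LinearEquiv.symm_prodComm, LinearEquiv.prodComm_apply, Prod.swap_prod_mk]
  rw [forall_comm]
  refine forall₂_congr fun a b => imp_congr_right fun _ => ?_
  rw [sub_eq_zero, sub_eq_zero, eq_comm]

end Submodule

namespace IsSelfAdjoint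

variable {𝕜 E : Type*} [RCLike 𝕜] [NormedAddCommGroup E] [InnerProductSpace 𝕜 E]
  [CompleteSpace E] {A : E →ₗ.[𝕜] E}

theorem dense_range (hA : IsSelfAdjoint A) (hker : LinearMap.ker A.toFun = ⊥) :
    Dense (LinearMap.range A.toFun : Set E) := by
  rw [Submodule.dense_iff_topologicalClosure_eq_top, Submodule.topologicalClosure_eq_top_iff,
    Submodule.eq_bot_iff]
  intro u hu
  have hgraph : (u, (0 : E)) ∈ A.graph := by
    rw [← isSelfAdjoint_def.mp hA, adjoint_graph_eq_graph_adjoint hA.dense_domain,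
      Submodule.mem_adjoint_iff]
    intro a b hab
    obtain ⟨x, rfl, rfl⟩ := (mem_graph_iff A).mp hab
    simpa using (Submodule.mem_orthogonal _ u).mp hu _ (LinearMap.mem_range_self _ x)
  obtain ⟨x, hxu, hx0⟩ := (mem_graph_iff A).mp hgraph
  rw [← show (x : E) = u from hxu, LinearMap.ker_eq_bot'.mp hker x hx0, Submodule.coe_zero]

theorem inverse (hA : IsSelfAdjoint A) (hker : LinearMap.ker A.toFun = ⊥) :
    IsSelfAdjoint A.inverse := by
  have hdense : Dense (A.inverse.domain : Set E) := inverse_domain (f := A) ▸ hA.dense_range hker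
  refine isSelfAdjoint_def.mpr (eq_of_eq_graph ?_)
  rw [adjoint_graph_eq_graph_adjoint hdense, inverse_graph hker, Submodule.adjoint_map_prodComm,
    ← adjoint_graph_eq_graph_adjoint hA.dense_domain, isSelfAdjoint_def.mp hA]

end IsSelfAdjoint

section blockOp

variable {H : Type*} [NormedAddCommGroup H] [InnerProductSpace ℂ H] {S R : H →ₗ.[ℂ] H}

theorem blockOp_apply (z : (blockOp S R).domain) :
    blockOp S R z = WithLp.toLp 2 (S ⟨z.1.ofLp.2, z.2.2⟩, R ⟨z.1.ofLp.1, z.2.1⟩) :=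
  rfl

theorem blockOp_apply_inl (x : R.domain) :
    blockOp S R ⟨WithLp.toLp 2 ((x : H), 0), x.2, zero_mem _⟩ = WithLp.toLp 2 (0, R x) :=
  congrArg (WithLp.toLp 2) (Prod.ext S.map_zero rfl)

theorem blockOp_apply_inr (y : S.domain) :
    blockOp S R ⟨WithLp.toLp 2 (0, (y : H)), zero_mem _, y.2⟩ = WithLp.toLp 2 (S y, 0) :=
  congrArg (WithLp.toLp 2) (Prod.ext rfl R.map_zero)

theorem dense_blockOp_domain (hS : Dense (S.domain : Set H)) (hR : Dense (R.domain : Set H)) :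
    Dense ((blockOp S R).domain : Set (WithLp 2 (H × H))) :=
  (hR.prod hS).preimage (WithLp.homeomorphProd 2 H H).isOpenMap

variable [CompleteSpace H]

theorem isFormalAdjoint_blockOp_adjoint (hS : Dense (S.domain : Set H))
    (hR : Dense (R.domain : Set H)) :
    (blockOp S R).IsFormalAdjoint (blockOp R† S†) := by
  intro x y
  simp only [blockOp_apply, WithLp.prod_inner_apply]
  rw [add_comm]
  exact congrArg₂ (· + ·) ((adjoint_isFormalAdjoint hR).symm ⟨_, x.2.1⟩ ⟨_, y.2.2⟩)
    ((adjoint_isFormalAdjoint hS).symm ⟨_, x.2.2⟩ ⟨_, y.2.1⟩)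

theorem adjoint_blockOp (hS : Dense (S.domain : Set H)) (hR : Dense (R.domain : Set H)) :
    (blockOp S R)† = blockOp R† S† := by
  have hT := dense_blockOp_domain hS hR
  have hle := (isFormalAdjoint_blockOp_adjoint hS hR).le_adjoint hT
  refine (eq_of_le_of_domain_eq hle (le_antisymm hle.1 fun z hz => ?_)).symm
  have hadj := adjoint_isFormalAdjoint hT ⟨z, hz⟩
  set w := (blockOp S R)† ⟨z, hz⟩
  refine ⟨mem_adjoint_domain_of_exists _ ⟨w.ofLp.2, fun y => ?_⟩,
    mem_adjoint_domain_of_exists _ ⟨w.ofLp.1, fun x => ?_⟩⟩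
  · simpa [blockOp_apply_inr, WithLp.prod_inner_apply] using
      hadj ⟨WithLp.toLp 2 (0, y), zero_mem _, y.2⟩
  · simpa [blockOp_apply_inl, WithLp.prod_inner_apply] using
      hadj ⟨WithLp.toLp 2 (x, 0), x.2, zero_mem _⟩

end blockOp

/-- The adjoint of the block operator `T = [[0, A⁻¹],[B, 0]]` is `[[0, B],[A⁻¹, 0]]`. -/
theorem adjoint_blockOp_inverse {H : Type*} [NormedAddCommGroup H]
    [InnerProductSpace ℂ H] [CompleteSpace H] (A B : H →ₗ.[ℂ] H)
    (hA : IsSelfAdjoint A) (hB : IsSelfAdjoint B)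
    (hAinj : Function.Injective (A.toFun : A.domain → H)) :
    (blockOp A.inverse B)† = blockOp B A.inverse := by
  have hAinv : IsSelfAdjoint A.inverse := hA.inverse (LinearMap.ker_eq_bot.mpr hAinj)
  rw [adjoint_blockOp hAinv.dense_domain hB.dense_domain, isSelfAdjoint_def.mp hB,
    isSelfAdjoint_def.mp hAinv]
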